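/- arXiv:math/0303060 — 4 statements merged into one kernel-verified Lean document; each statement's English description precedes it below -/
import Mathlib

section
/- Let I be a real interval and f : I → ℝ a convex function. For every natural number n, every m-tuple (x_1, …, x_m) of self-adjoint n×n complex matrices whose spectra are contained in I, and every m-tuple (a_1, …, a_m) of n×n complex matrices with ∑_{k=1}^m a_k* a_k = 1, one has Tr( f( ∑_{k=1}^m a_k* x_k a_k ) ) ≤ Tr( ∑_{k=1}^m a_k* f(x_k) a_k ), where f is applied to a self-adjoint matrix by the continuous functional calculus (the spectrum of ∑_{k=1}^m a_k* x_k a_k is automatically contained in I, since its numerical range lies in I). -/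
/-!
Let `b i` be an orthonormal eigenbasis of `y = ∑ₖ aₖᴴ xₖ aₖ`, with eigenvalues `λ i`. Expanding
`aₖ (b i)` in an eigenbasis `eₖⱼ` of `xₖ` (eigenvalues `μₖⱼ`) writes `λ i = ⟪b i, y (b i)⟫` as
`∑ₖⱼ |⟪eₖⱼ, aₖ (b i)⟫|² μₖⱼ`, and the weights sum to `⟪b i, ∑ₖ aₖᴴ aₖ (b i)⟫ = 1`. This is a
convex combination of points of `I`, so scalar Jensen gives
`f (λ i) ≤ ∑ₖⱼ |⟪eₖⱼ, aₖ (b i)⟫|² f (μₖⱼ) = ⟪b i, ∑ₖ aₖᴴ f(xₖ) aₖ (b i)⟫`; summing over `i`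
compares the two traces.
-/

open scoped ComplexOrder Matrix

namespace Matrix

variable {𝕜 m n : Type*} [RCLike 𝕜] [Fintype m] [Fintype n]

lemma trace_eq_sum_star_dotProduct_mulVec [DecidableEq n] (M : Matrix n n 𝕜)
    (b : OrthonormalBasis n 𝕜 (EuclideanSpace 𝕜 n)) :
    M.trace = ∑ i, star ⇑(b i) ⬝ᵥ (M *ᵥ ⇑(b i)) := by
  rw [← trace_toLin_eq M (PiLp.basisFun 2 𝕜 n), ← toLpLin_eq_toLin,
    LinearMap.trace_eq_sum_inner _ b]
  refine Finset.sum_congr rfl fun i _ => ?_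
  rw [EuclideanSpace.inner_eq_star_dotProduct, dotProduct_comm]
  rfl

lemma star_dotProduct_conjTranspose_mul_mul_mulVec (a : Matrix m n 𝕜) (M : Matrix m m 𝕜)
    (v : n → 𝕜) : star v ⬝ᵥ ((aᴴ * M * a) *ᵥ v) = star (a *ᵥ v) ⬝ᵥ (M *ᵥ (a *ᵥ v)) := by
  rw [← mulVec_mulVec, ← mulVec_mulVec, dotProduct_mulVec, star_mulVec]

namespace IsHermitian

variable [DecidableEq m] {A : Matrix m m 𝕜} (hA : A.IsHermitian)

noncomputable def spectralWeight (u : m → 𝕜) (j : m) : ℝ :=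
  RCLike.normSq (star ⇑(hA.eigenvectorBasis j) ⬝ᵥ u)

lemma star_dotProduct_cfc_mulVec (g : ℝ → ℝ) (u : m → 𝕜) :
    star u ⬝ᵥ (hA.cfc g *ᵥ u) = ((∑ j, hA.spectralWeight u j * g (hA.eigenvalues j) : ℝ) : 𝕜) := by
  set U : Matrix m m 𝕜 := ↑hA.eigenvectorUnitary
  have hU : ∀ j, (star U *ᵥ u) j = star ⇑(hA.eigenvectorBasis j) ⬝ᵥ u := fun j => by
    simp [U, mulVec, dotProduct, star_apply]
  simp only [spectralWeight, ← hU]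
  rw [IsHermitian.cfc, Unitary.conjStarAlgAut_apply, ← mulVec_mulVec, ← mulVec_mulVec,
    dotProduct_mulVec, ← star_star (star u ᵥ* _), star_vecMul, star_star]
  generalize star U *ᵥ u = w
  simp only [dotProduct, mulVec_diagonal, Pi.star_apply, Function.comp_apply, RCLike.normSq_eq_def']
  push_cast
  refine Finset.sum_congr rfl fun j _ => ?_
  rw [← RCLike.conj_mul, RCLike.star_def]
  ring

lemma spectralWeight_eigenvectorBasis (i j : m) :
    hA.spectralWeight (hA.eigenvectorBasis i) j = if j = i then 1 else 0 := by
  rw [spectralWeight, dotProduct_comm, ← EuclideanSpace.inner_eq_star_dotProduct,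
    OrthonormalBasis.inner_eq_ite]
  split_ifs <;> simp

lemma star_dotProduct_cfc_mulVec_eigenvectorBasis (g : ℝ → ℝ) (i : m) :
    star ⇑(hA.eigenvectorBasis i) ⬝ᵥ (hA.cfc g *ᵥ ⇑(hA.eigenvectorBasis i)) =
      g (hA.eigenvalues i) := by
  simp [star_dotProduct_cfc_mulVec, spectralWeight_eigenvectorBasis]

lemma cfc_id : hA.cfc id = A := by
  rw [← cfc_eq, _root_.cfc_id ℝ A hA.isSelfAdjoint]

lemma cfc_one : hA.cfc 1 = 1 := by
  rw [← cfc_eq, _root_.cfc_one ℝ A]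

end IsHermitian

variable {ι : Type*} [DecidableEq m] [Fintype ι] {x : ι → Matrix m m 𝕜}

lemma star_dotProduct_sum_conj_cfc_mulVec (hx : ∀ k, (x k).IsHermitian) (a : ι → Matrix m n 𝕜)
    (g : ℝ → ℝ) (v : n → 𝕜) :
    star v ⬝ᵥ ((∑ k, (a k)ᴴ * (hx k).cfc g * a k) *ᵥ v) =
      ((∑ k, ∑ j, (hx k).spectralWeight (a k *ᵥ v) j * g ((hx k).eigenvalues j) : ℝ) : 𝕜) := by
  simp only [sum_mulVec, dotProduct_sum, star_dotProduct_conjTranspose_mul_mul_mulVec,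
    IsHermitian.star_dotProduct_cfc_mulVec, RCLike.ofReal_sum]

end Matrix

open Matrix in
theorem ConvexOn.map_star_dotProduct_sum_conj_mulVec_le {𝕜 m n ι : Type*} [RCLike 𝕜]
    [Fintype m] [DecidableEq m] [Fintype n] [DecidableEq n] [Fintype ι] {I : Set ℝ} {f : ℝ → ℝ}
    (hf : ConvexOn ℝ I f) {x : ι → Matrix m m 𝕜} (hx : ∀ k, (x k).IsHermitian)
    (hspec : ∀ k, spectrum ℝ (x k) ⊆ I) {a : ι → Matrix m n 𝕜} (ha : ∑ k, (a k)ᴴ * a k = 1)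
    {v : n → 𝕜} (hv : star v ⬝ᵥ v = 1) {t : ℝ}
    (ht : star v ⬝ᵥ ((∑ k, (a k)ᴴ * x k * a k) *ᵥ v) = t) :
    (f t : 𝕜) ≤ star v ⬝ᵥ ((∑ k, (a k)ᴴ * (hx k).cfc f * a k) *ᵥ v) := by
  set w : ι × m → ℝ := fun p => (hx p.1).spectralWeight (a p.1 *ᵥ v) p.2
  set μ : ι × m → ℝ := fun p => (hx p.1).eigenvalues p.2
  have hw_sum : ∑ p, w p = 1 := by
    have h := star_dotProduct_sum_conj_cfc_mulVec hx a 1 v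
    simp only [IsHermitian.cfc_one, Matrix.mul_one, ha, one_mulVec, hv, Pi.one_apply,
      mul_one] at h
    rw [Fintype.sum_prod_type]
    exact_mod_cast h.symm
  have hw_mean : ∑ p, w p • μ p = t := by
    have h := star_dotProduct_sum_conj_cfc_mulVec hx a id v
    simp only [IsHermitian.cfc_id, ht, id] at h
    rw [Fintype.sum_prod_type]
    exact_mod_cast h.symm
  have hjensen : f (∑ p, w p • μ p) ≤ ∑ p, w p • f (μ p) :=
    hf.map_sum_le (fun p _ => RCLike.normSq_nonneg _) hw_sum fun p _ =>
      hspec p.1 ((hx p.1).eigenvalues_mem_spectrum_real p.2)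
  rw [hw_mean, Fintype.sum_prod_type] at hjensen
  rw [star_dotProduct_sum_conj_cfc_mulVec, RCLike.ofReal_le_ofReal]
  exact hjensen

theorem jensen_trace_inequality_general
    (I : Set ℝ) (f : ℝ → ℝ) (hf : ConvexOn ℝ I f)
    (n m : ℕ) (x a : Fin m → Matrix (Fin n) (Fin n) ℂ)
    (hx : ∀ k, (x k).IsHermitian)
    (hspec : ∀ k, spectrum ℝ (x k) ⊆ I)
    (ha : ∑ k, (a k)ᴴ * a k = 1)
    (hy : (∑ k, (a k)ᴴ * x k * a k).IsHermitian) :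
    (hy.cfc f).trace ≤ (∑ k, (a k)ᴴ * (hx k).cfc f * a k).trace := by
  set b := hy.eigenvectorBasis
  calc (hy.cfc f).trace = ∑ i, star ⇑(b i) ⬝ᵥ (hy.cfc f *ᵥ ⇑(b i)) :=
        Matrix.trace_eq_sum_star_dotProduct_mulVec _ b
    _ ≤ ∑ i, star ⇑(b i) ⬝ᵥ ((∑ k, (a k)ᴴ * (hx k).cfc f * a k) *ᵥ ⇑(b i)) := by
        refine Finset.sum_le_sum fun i _ => ?_
        rw [hy.star_dotProduct_cfc_mulVec_eigenvectorBasis]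
        refine hf.map_star_dotProduct_sum_conj_mulVec_le hx hspec ha ?_ ?_
        · simpa [hy.cfc_one] using hy.star_dotProduct_cfc_mulVec_eigenvectorBasis 1 i
        · simpa [hy.cfc_id] using hy.star_dotProduct_cfc_mulVec_eigenvectorBasis id i
    _ = _ := (Matrix.trace_eq_sum_star_dotProduct_mulVec _ b).symm

/-- **Jensen's trace inequality for matrices.**  If `f` is a convex function on a real
interval `I`, `(x 1, …, x m)` are self-adjoint (Hermitian) `n × n` complex matrices with
spectra in `I`, and `(a 1, …, a m)` is a unital column of `n × n` matrices
(`∑ k, (a k)ᴴ * a k = 1`), then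
`Tr (f (∑ k, (a k)ᴴ * x k * a k)) ≤ Tr (∑ k, (a k)ᴴ * f (x k) * a k)`,
where `f` is applied via the functional calculus for Hermitian matrices. -/
theorem jensen_trace_inequality
    (I : Set ℝ) (hI : I.OrdConnected) (f : ℝ → ℝ) (hf : ConvexOn ℝ I f)
    (n m : ℕ) (x a : Fin m → Matrix (Fin n) (Fin n) ℂ)
    (hx : ∀ k, (x k).IsHermitian)
    (hspec : ∀ k, spectrum ℝ (x k) ⊆ I)
    (ha : ∑ k, (a k)ᴴ * a k = 1)
    (hy : (∑ k, (a k)ᴴ * x k * a k).IsHermitian) :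
    (hy.cfc f).trace ≤ (∑ k, (a k)ᴴ * (hx k).cfc f * a k).trace :=
  jensen_trace_inequality_general I f hf n m x a hx hspec ha hy
end

section
/- Let A be a C*-algebra equipped with pairwise commuting C*-subalgebras A_1, …, A_n such that for each i, A_i equals the relative commutant in A of the C*-subalgebra generated by the A_j for j ≠ i. Then the subspace ⊕_{i=1}^n (A_i)_sa = { (x_1, …, x_n) : x_i ∈ (A_i)_sa } is a maximal set of pairwise compatible abelian n-tuples in A. -/
/-- An abelian `n`-tuple in a C*-algebra `A`: a tuple of self-adjoint elements which
pairwise commute. -/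
def IsAbelianTuple {A : Type*} [CStarAlgebra A] {n : ℕ} (x : Fin n → A) : Prop :=
  (∀ i, IsSelfAdjoint (x i)) ∧ ∀ i j, x i * x j = x j * x i

/-- Two abelian `n`-tuples are compatible when `[x i, y j] = [x j, y i]` for all `i, j`. -/
def AreCompatible {A : Type*} [CStarAlgebra A] {n : ℕ} (x y : Fin n → A) : Prop :=
  ∀ i j, x i * y j - y j * x i = x j * y i - y i * x j

/-- The relative commutant of a subset `B` of `A`.  (The relative commutant of the
C*-subalgebra generated by `B` coincides with the relative commutant of `B` itself.) -/
def relCommutant {A : Type*} [CStarAlgebra A] (B : Set A) : Set A :=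
  {a | ∀ b ∈ B, b * a = a * b}

/-- Let `A` be a C*-algebra with pairwise commuting C*-subalgebras `𝒜 1, …, 𝒜 n` such
that each `𝒜 i` is the relative commutant in `A` of the C*-subalgebra generated by the
`𝒜 j`, `j ≠ i` (equivalently, of their union).  Then the set
`⊕ (𝒜 i)_sa = { (x 1, …, x n) | x i ∈ (𝒜 i)_sa }` is a maximal set of pairwise
compatible abelian `n`-tuples in `A`. -/
theorem maximal_compatible_set_from_commuting_subalgebras
    {A : Type*} [CStarAlgebra A] {n : ℕ}
    (𝒜 : Fin n → StarSubalgebra ℂ A) (hclosed : ∀ i, IsClosed ((𝒜 i : Set A)))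
    (hcomm : ∀ i j, i ≠ j → ∀ a ∈ 𝒜 i, ∀ b ∈ 𝒜 j, a * b = b * a)
    (hrel : ∀ i, (𝒜 i : Set A) = relCommutant (⋃ j ∈ {j : Fin n | j ≠ i}, (𝒜 j : Set A)))
    (S : Set (Fin n → A))
    (hS : S = {x | ∀ i, x i ∈ 𝒜 i ∧ IsSelfAdjoint (x i)}) :
    (∀ u ∈ S, IsAbelianTuple u) ∧
      (∀ u ∈ S, ∀ v ∈ S, AreCompatible u v) ∧
      (∀ w : Fin n → A, IsAbelianTuple w → (∀ u ∈ S, AreCompatible w u) → w ∈ S) := by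
  subst hS
  refine ⟨?_, ?_, ?_⟩
  · rintro u hu
    refine ⟨fun i => (hu i).2, fun i j => ?_⟩
    rcases eq_or_ne i j with rfl | hij
    · rfl
    · exact hcomm i j hij (u i) (hu i).1 (u j) (hu j).1
  · rintro u hu v hv i j
    rcases eq_or_ne i j with rfl | hij
    · rfl
    · rw [hcomm j i hij.symm (v j) (hv j).1 (u i) (hu i).1,
        hcomm j i hij.symm (u j) (hu j).1 (v i) (hv i).1, sub_self, sub_self]
  · intro w hw hcompat i
    refine ⟨?_, hw.1 i⟩
    -- It suffices to show `w i` commutes with every self-adjoint element of each `𝒜 j`, j ≠ i.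
    have key : ∀ j, j ≠ i → ∀ b ∈ 𝒜 j, IsSelfAdjoint b → b * w i = w i * b := by
      intro j hj b hb hsb
      set u : Fin n → A := fun k => if k = j then b else 0 with hu
      have huS : u ∈ {x : Fin n → A | ∀ i, x i ∈ 𝒜 i ∧ IsSelfAdjoint (x i)} := by
        intro k
        by_cases hk : k = j
        · subst hk; simp only [hu, if_pos rfl]; exact ⟨hb, hsb⟩
        · simp only [hu, if_neg hk]; exact ⟨zero_mem _, (IsSelfAdjoint.zero A : IsSelfAdjoint (0:A))⟩
      have h := hcompat u huS i j
      have huj : u j = b := if_pos rfl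
      have hui : u i = 0 := if_neg (fun h => hj h.symm)
      rw [huj, hui, mul_zero, zero_mul, sub_zero] at h
      have : w i * b - b * w i = 0 := h
      have := sub_eq_zero.mp this
      exact this.symm
    rw [SetLike.mem_coe.symm, hrel i]
    intro b hb
    simp only [Set.mem_iUnion, Set.mem_setOf_eq] at hb
    obtain ⟨k, hk, hbk⟩ := hb
    -- decompose b into self-adjoint parts
    set b₁ : A := ((1 : ℂ)/2) • (b + star b) with hb₁
    set b₂ : A := (-(Complex.I)/2) • (b - star b) with hb₂
    have hb₁m : b₁ ∈ 𝒜 k := SMulMemClass.smul_mem _ (add_mem hbk (star_mem hbk))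
    have hb₂m : b₂ ∈ 𝒜 k := SMulMemClass.smul_mem _ (sub_mem hbk (star_mem hbk))
    have hb₁s : IsSelfAdjoint b₁ := by
      simp only [hb₁, IsSelfAdjoint, star_smul, star_add, star_star]
      rw [add_comm (star b) b]
      congr 1
      simp [Complex.ext_iff]
    have hb₂s : IsSelfAdjoint b₂ := by
      rw [hb₂, IsSelfAdjoint, star_smul, star_sub, star_star,
        show star (-(Complex.I)/2) = Complex.I/2 by simp [Complex.ext_iff],
        show (Complex.I/2 : ℂ) = -(-(Complex.I)/2) by ring, neg_smul, ← smul_neg, neg_sub]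
    have hdecomp : b = b₁ + Complex.I • b₂ := by
      rw [hb₁, hb₂, smul_smul]
      rw [show Complex.I * (-(Complex.I)/2) = (1/2 : ℂ) by norm_num [Complex.ext_iff]]
      rw [← smul_add]
      rw [show b + star b + (b - star b) = (2 : ℂ) • b by
        rw [two_smul]; abel]
      rw [smul_smul]
      norm_num
    have h₁ := key k hk b₁ hb₁m hb₁s
    have h₂ := key k hk b₂ hb₂m hb₂s
    simp only [hdecomp, add_mul, mul_add, smul_mul_assoc, mul_smul_comm, h₁, h₂]
end

section
/- Let f be a continuous function on a cube I = [α_1, β_1] × ⋯ × [α_n, β_n] in ℝⁿ that is monotone increasing in each variable and concave. Then for any two abelian n-tuples (x_1, …, x_n) and (y_1, …, y_n) of self-adjoint elements in a unital C*-algebra A with α_i·1 ≤ x_i ≤ y_i ≤ β_i·1 for all i, and any positive linear functional φ on A containing y_1, …, y_n in its centralizer, one has φ( f(x) ) ≤ φ( f(y) ). -/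
open scoped ComplexOrder

/-!
Take a partition of unity `(G c)` on the cube with small supports and evaluate it at `y`. As `y`
lies in the centralizer of `φ`, so does each `G c (y)`, hence `a ↦ φ (G c (y) * a)` is again a
positive functional. Pick a point `μ` of the cube dominating the support of `G c`. Concavity and
monotonicity give an affine majorant `f ≤ f μ + ε + ∑ aᵢ (tᵢ - μᵢ)` with all `aᵢ ≥ 0`; since
`xᵢ ≤ yᵢ`, and `yᵢ ≤ μᵢ` on the support, this yields `φ (G c (y) f(x)) ≤ (f μ + ε) φ (G c (y))`,
while uniform continuity gives `(f μ - ε) φ (G c (y)) ≤ φ (G c (y) f(y))`. Summing over `c`,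
`φ (f(x)) ≤ φ (f(y)) + 2ε φ 1` for every `ε > 0`.
-/

/-- The cube `I = [α 1, β 1] × ⋯ × [α n, β n]` in `ℝⁿ`. -/
def cube {n : ℕ} (I : Fin n → Set ℝ) : Set (Fin n → ℝ) := {l | ∀ i, l i ∈ I i}

/-- The `i`-th coordinate function on the cube, as a complex-valued continuous map. -/
noncomputable def coordFn {n : ℕ} (I : Fin n → Set ℝ) (i : Fin n) : C(cube I, ℂ) :=
  ⟨fun l => ((l : Fin n → ℝ) i : ℂ),
    Complex.continuous_ofReal.comp ((continuous_apply i).comp continuous_subtype_val)⟩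

/-- A real function which is continuous on the cube, as a complex-valued continuous map. -/
noncomputable def cubeFn {n : ℕ} {I : Fin n → Set ℝ} {f : (Fin n → ℝ) → ℝ}
    (hf : ContinuousOn f (cube I)) : C(cube I, ℂ) :=
  ⟨fun l => (f l : ℂ),
    Complex.continuous_ofReal.comp (continuousOn_iff_continuous_restrict.mp hf)⟩

section CStarAlgebra

variable {A : Type*} [CStarAlgebra A] [PartialOrder A] [StarOrderedRing A]

noncomputable def PositiveLinearMap.ofStarMulSelfNonneg {E : Type*} [AddCommGroup E]
    [PartialOrder E] [IsOrderedAddMonoid E] [Module ℂ E] (φ : A →ₗ[ℂ] E) (hφ : ∀ b, 0 ≤ φ (star b * b)) :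
    A →ₚ[ℂ] E :=
  .mk₀ φ fun a ha => by
    obtain ⟨b, rfl⟩ := CStarAlgebra.nonneg_iff_eq_star_mul_self.mp ha
    exact hφ b

namespace PositiveLinearMap

variable (ψ : A →ₚ[ℂ] ℂ)

def centralizer : StarSubalgebra ℂ A where
  carrier := {y | ∀ x, ψ (x * y) = ψ (y * x)}
  mul_mem' {y z} hy hz x :=
    calc ψ (x * (y * z)) = ψ (z * (x * y)) := by rw [← mul_assoc, hz]
      _ = ψ (y * (z * x)) := by rw [← mul_assoc, hy]
      _ = ψ (y * z * x) := by rw [mul_assoc]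
  add_mem' hy hz x := by
    simp only [mul_add, add_mul, map_add, hy x, hz x]
  algebraMap_mem' r x := by
    rw [Algebra.commutes]
  star_mem' {y} hy x := by
    rw [← star_star (x * star y), star_mul, star_star, map_star, ← hy, ← map_star, star_mul,
      star_star]

lemma isClosed_centralizer : IsClosed (ψ.centralizer : Set A) := by
  change IsClosed {y | ∀ x, ψ (x * y) = ψ (y * x)}
  simp_rw [Set.ofPred_forall]
  exact isClosed_iInter fun x => isClosed_eq (by fun_prop) (by fun_prop)

variable {ψ}

lemma apply_star_mul_self_mul_mono {s : A} (hs : s ∈ ψ.centralizer) {a b : A} (hab : a ≤ b) :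
    ψ (star s * s * a) ≤ ψ (star s * s * b) := by
  have hcycle (c : A) : ψ (star s * s * c) = ψ (s * c * star s) := by
    rw [mul_assoc, ← star_mem hs (s * c)]
  rw [hcycle, hcycle]
  exact OrderHomClass.mono ψ (star_right_conjugate_le_conjugate hab s)

end PositiveLinearMap

lemma StarAlgHom.apply_mem_of_separatesPoints {X : Type*} [TopologicalSpace X] [CompactSpace X]
    (π : C(X, ℂ) →⋆ₐ[ℂ] A) {S : StarSubalgebra ℂ A} (hS : IsClosed (S : Set A))
    {ι : Type*} {t : ι → C(X, ℂ)} (ht : ∀ p q, p ≠ q → ∃ i, t i p ≠ t i q)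
    (htS : ∀ i, π (t i) ∈ S) (g : C(X, ℂ)) : π g ∈ S := by
  have hle : StarAlgebra.adjoin ℂ (Set.range t) ≤ S.comap π :=
    StarAlgebra.adjoin_le (by rintro _ ⟨i, rfl⟩; exact htS i)
  have hsep : (StarAlgebra.adjoin ℂ (Set.range t)).SeparatesPoints := fun p q hpq => by
    obtain ⟨i, hi⟩ := ht p q hpq
    exact ⟨_, ⟨t i, StarAlgebra.subset_adjoin ℂ _ ⟨i, rfl⟩, rfl⟩, hi⟩
  have hclosure := StarSubalgebra.topologicalClosure_minimal hle (hS.preimage (map_continuous π))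
  rw [ContinuousMap.starSubalgebra_topologicalClosure_eq_top_of_separatesPoints _ hsep] at hclosure
  exact hclosure (StarSubalgebra.mem_top (x := g))

end CStarAlgebra

theorem ConcaveOn.exists_le_add_continuousLinearMap {E : Type*} [NormedAddCommGroup E]
    [NormedSpace ℝ E] {K : Set E} {f : E → ℝ} (hK : IsClosed K) (hf : ContinuousOn f K)
    (hconc : ConcaveOn ℝ K f) {μ : E} (hμ : μ ∈ K) {ε : ℝ} (hε : 0 < ε) :
    ∃ ℓ : E →L[ℝ] ℝ, ∀ l ∈ K, f l ≤ f μ + ε + ℓ (l - μ) := by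
  -- A functional `L` separating `(μ, f μ + ε)` from the hypograph has vertical slope `b > 0`;
  -- its horizontal part, rescaled by `-b⁻¹`, is the required `ℓ`.
  obtain ⟨L, u, hL, hu⟩ := geometric_hahn_banach_closed_point (x := (μ, f μ + ε))
    hconc.convex_hypograph ((upperSemicontinuousOn_iff_isClosed_hypograph hK).mp
      hf.upperSemicontinuousOn) (fun h => by linarith [h.2])
  have hsplit (v : E) (s : ℝ) : L (v, s) = L (v, 0) + s * L (0, 1) := by
    rw [← smul_eq_mul, ← map_smul, ← map_add]
    simp
  set b := L (0, 1)
  have hμL := hL (μ, f μ) ⟨hμ, le_rfl⟩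
  rw [hsplit] at hμL hu
  have hb : 0 < b := by nlinarith
  refine ⟨-(b⁻¹ • L.comp (ContinuousLinearMap.inl ℝ E ℝ)), fun l hl => ?_⟩
  have hlL := hL (l, f l) ⟨hl, le_rfl⟩
  rw [hsplit] at hlL
  have hsub : L (l - μ, 0) = L (l, 0) - L (μ, 0) := by
    rw [← map_sub, Prod.mk_sub_mk, sub_zero]
  simp only [neg_apply, smul_apply, ContinuousLinearMap.comp_apply,
    ContinuousLinearMap.inl_apply, hsub, smul_eq_mul]
  have hmul : b⁻¹ * (L (l, 0) - L (μ, 0)) * b = L (l, 0) - L (μ, 0) := by field_simp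
  nlinarith [hmul]

lemma isCompact_cube {n : ℕ} (α β : Fin n → ℝ) :
    IsCompact (cube fun i => Set.Icc (α i) (β i)) := by
  convert isCompact_univ_pi fun i => isCompact_Icc (a := α i) (b := β i)
  ext l
  simp [cube, Pi.le_def, forall_and]

instance {n : ℕ} (α β : Fin n → ℝ) : CompactSpace (cube fun i => Set.Icc (α i) (β i)) :=
  isCompact_iff_compactSpace.mp (isCompact_cube α β)

def cubeCoord {n : ℕ} (I : Fin n → Set ℝ) (i : Fin n) : C(cube I, ℝ) :=
  ⟨fun l => (l : Fin n → ℝ) i, (continuous_apply i).comp continuous_subtype_val⟩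

def realCubeFn {n : ℕ} {I : Fin n → Set ℝ} {f : (Fin n → ℝ) → ℝ}
    (hf : ContinuousOn f (cube I)) : C(cube I, ℝ) :=
  ⟨fun l => f l, hf.domRestrict⟩

@[simp]
lemma cubeCoord_apply {n : ℕ} (I : Fin n → Set ℝ) (i : Fin n) (l : cube I) :
    cubeCoord I i l = (l : Fin n → ℝ) i := rfl

@[simp]
lemma realCubeFn_apply {n : ℕ} {I : Fin n → Set ℝ} {f : (Fin n → ℝ) → ℝ}
    (hf : ContinuousOn f (cube I)) (l : cube I) : realCubeFn hf l = f l := rfl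

lemma exists_coordFn_ne {n : ℕ} (I : Fin n → Set ℝ) {p q : cube I} (hpq : p ≠ q) :
    ∃ i, coordFn I i p ≠ coordFn I i q := by
  by_contra! h
  exact hpq (Subtype.ext (funext fun i => by simpa [coordFn] using h i))

lemma exists_upper_corner {n : ℕ} {α β c : Fin n → ℝ}
    (hc : c ∈ cube fun i => Set.Icc (α i) (β i)) {r : ℝ} (hr : 0 ≤ r) :
    ∃ μ ∈ cube (fun i => Set.Icc (α i) (β i)), ∀ p ∈ cube (fun i => Set.Icc (α i) (β i)),
      dist p c < r → p ≤ μ ∧ dist p μ < 2 * r := by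
  refine ⟨fun i => min (c i + r) (β i),
    fun i => ⟨le_min (by linarith [(hc i).1]) ((hc i).1.trans (hc i).2), min_le_right _ _⟩,
    fun p hp hpc => ?_⟩
  have hr' : 0 < r := dist_nonneg.trans_lt hpc
  have hpc' (i : Fin n) : |p i - c i| < r := by
    simpa [Real.dist_eq] using (dist_pi_lt_iff hr').mp hpc i
  have hpμ (i : Fin n) : p i ≤ min (c i + r) (β i) :=
    le_min (by linarith [(abs_lt.mp (hpc' i)).2]) (hp i).2
  refine ⟨hpμ, (dist_pi_lt_iff (by positivity)).mpr fun i => ?_⟩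
  rw [Real.dist_eq, abs_sub_comm, abs_of_nonneg (sub_nonneg.mpr (hpμ i))]
  linarith [min_le_left (c i + r) (β i), (abs_lt.mp (hpc' i)).1]

theorem MonotoneOn.exists_nonneg_le_add_sum {n : ℕ} {α β : Fin n → ℝ} {f : (Fin n → ℝ) → ℝ}
    (hmono : MonotoneOn f (cube fun i => Set.Icc (α i) (β i)))
    (hf : ContinuousOn f (cube fun i => Set.Icc (α i) (β i)))
    (hconc : ConcaveOn ℝ (cube fun i => Set.Icc (α i) (β i)) f)
    {μ : Fin n → ℝ} (hμ : μ ∈ cube fun i => Set.Icc (α i) (β i)) {ε : ℝ} (hε : 0 < ε) :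
    ∃ c : Fin n → ℝ, 0 ≤ c ∧ ∀ l ∈ cube (fun i => Set.Icc (α i) (β i)),
      f l ≤ f μ + ε + ∑ i, c i * (l i - μ i) := by
  obtain ⟨ℓ, hℓ⟩ :=
    hconc.exists_le_add_continuousLinearMap (isCompact_cube α β).isClosed hf hμ hε
  set d : Fin n → ℝ := fun i => ℓ fun j => if i = j then 1 else 0
  have hℓd (v : Fin n → ℝ) : ℓ v = ∑ i, d i * v i := by
    rw [← ℓ.coe_coe, LinearMap.pi_apply_eq_sum_univ]
    simp [d, mul_comm]
  refine ⟨fun i => max (d i) 0, fun i => le_max_right _ _, fun l hl => ?_⟩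
  -- raising the coordinates with negative coefficient to `μ` can only increase `f`
  set l' : Fin n → ℝ := fun i => if 0 ≤ d i then l i else max (l i) (μ i)
  have hl' : l' ∈ cube fun i => Set.Icc (α i) (β i) := fun i => by
    by_cases h : 0 ≤ d i
    · simpa only [l', h, if_true] using hl i
    · simp only [l', h, if_false]
      exact ⟨le_max_of_le_left (hl i).1, max_le (hl i).2 (hμ i).2⟩
  have hll' : l ≤ l' := fun i => by
    by_cases h : 0 ≤ d i <;> simp [l', h]
  calc f l ≤ f l' := hmono hl hl' hll'
    _ ≤ f μ + ε + ∑ i, d i * (l' i - μ i) := by simpa [hℓd] using hℓ l' hl'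
    _ ≤ f μ + ε + ∑ i, max (d i) 0 * (l i - μ i) := by
      gcongr f μ + ε + ∑ i, ?_ with i
      by_cases h : 0 ≤ d i
      · simp [l', h]
      · simp only [l', h, if_false, max_eq_right (not_le.mp h).le, zero_mul]
        exact mul_nonpos_of_nonpos_of_nonneg (not_le.mp h).le (by simp)

theorem exists_finset_sum_eq_one_support_subset_ball {X : Type*} [MetricSpace X]
    [CompactSpace X] {δ : ℝ} (hδ : 0 < δ) : ∃ (t : Finset X) (G : X → C(X, ℝ)),
      (∀ c, 0 ≤ G c) ∧ ∑ c ∈ t, G c = 1 ∧ ∀ c, Function.support (G c) ⊆ Metric.ball c δ := by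
  classical
  obtain ⟨s, -, hs, hcover⟩ := finite_cover_balls_of_compact (isCompact_univ (X := X)) hδ
  obtain ⟨ρ, hρ⟩ := PartitionOfUnity.exists_isSubordinate isClosed_univ
    (fun c : hs.toFinset => Metric.ball (c : X) δ) (fun _ => Metric.isOpen_ball)
    (by simpa [Set.iUnion_subtype] using hcover)
  refine ⟨hs.toFinset, fun c => if h : c ∈ hs.toFinset then ρ ⟨c, h⟩ else 0,
    fun c => ?_, ?_, fun c p hcp => ?_⟩
  · dsimp only
    split_ifs
    exacts [fun p => ρ.nonneg _ p, le_rfl]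
  · ext p
    rw [← Finset.sum_coe_sort, ContinuousMap.sum_apply]
    simpa [finsum_eq_sum_of_fintype] using ρ.sum_eq_one (Set.mem_univ p)
  · simp only [Function.mem_support] at hcp
    split_ifs at hcp with h
    · exact hρ ⟨c, h⟩ (subset_tsupport _ hcp)
    · exact absurd rfl hcp

namespace ContinuousMap

variable {X : Type*} [TopologicalSpace X] {G u : C(X, ℝ)} {r : ℝ}

lemma mul_le_smul_of_forall_ne_zero (hG : 0 ≤ G) (h : ∀ p, G p ≠ 0 → u p ≤ r) :
    G * u ≤ r • G := fun p => by
  by_cases hp : G p = 0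
  · simp [hp]
  · simpa [mul_comm] using mul_le_mul_of_nonneg_left (h p hp) (hG p)

lemma smul_le_mul_of_forall_ne_zero (hG : 0 ≤ G) (h : ∀ p, G p ≠ 0 → r ≤ u p) :
    r • G ≤ G * u := fun p => by
  by_cases hp : G p = 0
  · simp [hp]
  · simpa [mul_comm] using mul_le_mul_of_nonneg_left (h p hp) (hG p)

end ContinuousMap

lemma le_of_forall_pos_le_add_smul {E : Type*} [AddCommGroup E] [PartialOrder E]
    [TopologicalSpace E] [ClosedIciTopology E] [Module ℝ E] [ContinuousSMul ℝ E] [ContinuousAdd E]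
    {a b c : E} (h : ∀ ε : ℝ, 0 < ε → a ≤ b + ε • c) : a ≤ b := by
  have hlim : Filter.Tendsto (fun ε : ℝ => b + ε • c) (nhdsWithin 0 (Set.Ioi 0)) (nhds b) := by
    have hcont : Continuous fun ε : ℝ => b + ε • c := by fun_prop
    simpa using (hcont.tendsto 0).mono_left nhdsWithin_le_nhds
  exact ge_of_tendsto hlim (eventually_nhdsWithin_of_forall h)

section FunctionalCalculus

variable {X : Type*} [TopologicalSpace X]
variable {A : Type*} [CStarAlgebra A] [PartialOrder A] [StarOrderedRing A]
variable {ψ : A →ₚ[ℂ] ℂ}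

lemma PositiveLinearMap.apply_mul_mono_of_nonneg {Φ : C(X, ℝ) →⋆ₐ[ℝ] A}
    (hΦ : ∀ g, Φ g ∈ ψ.centralizer) {g : C(X, ℝ)} (hg : 0 ≤ g) {a b : A} (hab : a ≤ b) :
    ψ (Φ g * a) ≤ ψ (Φ g * b) := by
  let s : C(X, ℝ) := ⟨fun p => √(g p), by fun_prop⟩
  have hgs : g = star s * s := by
    ext p
    exact (Real.mul_self_sqrt (hg p)).symm
  rw [hgs, map_mul Φ, map_star Φ]
  exact ψ.apply_star_mul_self_mul_mono (hΦ s) hab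

lemma PositiveLinearMap.apply_mul_le_smul_of_le_affine {n : ℕ} {Φx Φy : C(X, ℝ) →⋆ₐ[ℝ] A}
    (hΦy : ∀ g, Φy g ∈ ψ.centralizer) {u : Fin n → C(X, ℝ)} (hxy : ∀ i, Φx (u i) ≤ Φy (u i))
    {G F : C(X, ℝ)} (hG : 0 ≤ G) {m : ℝ} {μ c : Fin n → ℝ} (hc : 0 ≤ c)
    (hF : F ≤ algebraMap ℝ C(X, ℝ) m + ∑ i, c i • (u i - algebraMap ℝ C(X, ℝ) (μ i)))
    (hGu : ∀ i, G * u i ≤ μ i • G) :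
    ψ (Φy G * Φx F) ≤ m • ψ (Φy G) := by
  have hFx : Φx F ≤ algebraMap ℝ A m + ∑ i, c i • (Φx (u i) - algebraMap ℝ A (μ i)) := by
    simpa only [map_add, map_sum, map_smul, map_sub, AlgHomClass.commutes]
      using OrderHomClass.mono Φx hF
  have hterm (i : Fin n) : ψ (Φy G * Φx (u i)) ≤ μ i • ψ (Φy G) :=
    calc ψ (Φy G * Φx (u i)) ≤ ψ (Φy G * Φy (u i)) := ψ.apply_mul_mono_of_nonneg hΦy hG (hxy i)
      _ = ψ (Φy (G * u i)) := by rw [map_mul Φy]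
      _ ≤ ψ (Φy (μ i • G)) := OrderHomClass.mono ψ (OrderHomClass.mono Φy (hGu i))
      _ = μ i • ψ (Φy G) := by rw [map_smul, map_smul_of_tower]
  calc ψ (Φy G * Φx F)
      ≤ ψ (Φy G * (algebraMap ℝ A m + ∑ i, c i • (Φx (u i) - algebraMap ℝ A (μ i)))) :=
        ψ.apply_mul_mono_of_nonneg hΦy hG hFx
    _ = m • ψ (Φy G) + ∑ i, c i • (ψ (Φy G * Φx (u i)) - μ i • ψ (Φy G)) := by
        simp only [mul_add, Finset.mul_sum, mul_sub, mul_smul_comm, Algebra.algebraMap_eq_smul_one,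
          mul_one, map_add, map_sum, map_sub, map_smul_of_tower]
    _ ≤ m • ψ (Φy G) := add_le_of_nonpos_right <| Finset.sum_nonpos fun i _ =>
        smul_nonpos_of_nonneg_of_nonpos (hc i) (sub_nonpos.mpr (hterm i))

theorem PositiveLinearMap.apply_mul_le_apply_mul_add_of_concaveOn {n : ℕ} {α β : Fin n → ℝ}
    {f : (Fin n → ℝ) → ℝ} (hf : ContinuousOn f (cube fun i => Set.Icc (α i) (β i)))
    (hmono : MonotoneOn f (cube fun i => Set.Icc (α i) (β i)))
    (hconc : ConcaveOn ℝ (cube fun i => Set.Icc (α i) (β i)) f)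
    {Φx Φy : C(cube fun i => Set.Icc (α i) (β i), ℝ) →⋆ₐ[ℝ] A}
    (hΦy : ∀ g, Φy g ∈ ψ.centralizer) (hxy : ∀ i, Φx (cubeCoord _ i) ≤ Φy (cubeCoord _ i))
    {G : C(cube fun i => Set.Icc (α i) (β i), ℝ)} (hG : 0 ≤ G)
    {c : Fin n → ℝ} (hc : c ∈ cube fun i => Set.Icc (α i) (β i)) {r ε : ℝ} (hr : 0 ≤ r)
    (hε : 0 < ε) (hGc : ∀ p, G p ≠ 0 → dist (p : Fin n → ℝ) c < r)
    (hfr : ∀ p ∈ cube (fun i => Set.Icc (α i) (β i)), ∀ q ∈ cube (fun i => Set.Icc (α i) (β i)),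
      dist p q < 2 * r → dist (f p) (f q) < ε) :
    ψ (Φy G * Φx (realCubeFn hf)) ≤ ψ (Φy (G * realCubeFn hf)) + (2 * ε) • ψ (Φy G) := by
  obtain ⟨μ, hμK, hμ⟩ := exists_upper_corner hc hr
  have hnear (p : cube fun i => Set.Icc (α i) (β i)) (hp : G p ≠ 0) :
      (p : Fin n → ℝ) ≤ μ ∧ dist (p : Fin n → ℝ) μ < 2 * r :=
    hμ p p.2 (hGc p hp)
  obtain ⟨a, ha, haff⟩ := hmono.exists_nonneg_le_add_sum hf hconc hμK hε
  have hFaff : realCubeFn hf ≤ algebraMap ℝ _ (f μ + ε)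
      + ∑ i, a i • (cubeCoord _ i - algebraMap ℝ _ (μ i)) := by
    rw [ContinuousMap.le_def]
    intro p
    simpa using haff p p.2
  have hFμ : (f μ - ε) • G ≤ G * realCubeFn hf :=
    ContinuousMap.smul_le_mul_of_forall_ne_zero hG fun p hp => by
      have hfp := hfr p p.2 μ hμK (hnear p hp).2
      rw [Real.dist_eq, abs_lt] at hfp
      simp only [realCubeFn_apply]
      linarith
  calc ψ (Φy G * Φx (realCubeFn hf)) ≤ (f μ + ε) • ψ (Φy G) :=
        ψ.apply_mul_le_smul_of_le_affine hΦy hxy hG ha hFaff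
          (fun i => ContinuousMap.mul_le_smul_of_forall_ne_zero hG fun p hp => (hnear p hp).1 i)
    _ = ψ (Φy ((f μ - ε) • G)) + (2 * ε) • ψ (Φy G) := by
        rw [map_smul, map_smul_of_tower, ← add_smul]
        congr 1
        ring
    _ ≤ ψ (Φy (G * realCubeFn hf)) + (2 * ε) • ψ (Φy G) :=
        add_le_add_left (OrderHomClass.mono ψ (OrderHomClass.mono Φy hFμ)) _

theorem PositiveLinearMap.apply_le_apply_add_smul_of_concaveOn {n : ℕ} {α β : Fin n → ℝ}
    {f : (Fin n → ℝ) → ℝ} (hf : ContinuousOn f (cube fun i => Set.Icc (α i) (β i)))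
    (hmono : MonotoneOn f (cube fun i => Set.Icc (α i) (β i)))
    (hconc : ConcaveOn ℝ (cube fun i => Set.Icc (α i) (β i)) f)
    {Φx Φy : C(cube fun i => Set.Icc (α i) (β i), ℝ) →⋆ₐ[ℝ] A}
    (hΦy : ∀ g, Φy g ∈ ψ.centralizer) (hxy : ∀ i, Φx (cubeCoord _ i) ≤ Φy (cubeCoord _ i))
    {ε : ℝ} (hε : 0 < ε) :
    ψ (Φx (realCubeFn hf)) ≤ ψ (Φy (realCubeFn hf)) + ε • ψ 1 := by
  obtain ⟨δ, hδ, hfδ⟩ := Metric.uniformContinuousOn_iff.mp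
    ((isCompact_cube α β).uniformContinuousOn_of_continuous hf) (ε / 2) (half_pos hε)
  obtain ⟨t, G, hG, hGsum, hGδ⟩ := exists_finset_sum_eq_one_support_subset_ball
    (X := cube fun i => Set.Icc (α i) (β i)) (half_pos hδ)
  have hcell (c : cube fun i => Set.Icc (α i) (β i)) : ψ (Φy (G c) * Φx (realCubeFn hf))
      ≤ ψ (Φy (G c * realCubeFn hf)) + ε • ψ (Φy (G c)) := by
    simpa only [mul_div_cancel₀ ε two_ne_zero] using
      ψ.apply_mul_le_apply_mul_add_of_concaveOn hf hmono hconc hΦy hxy (hG c) c.2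
        (half_pos hδ).le (half_pos hε) (fun p hp => hGδ c hp)
        (by rwa [mul_div_cancel₀ δ two_ne_zero])
  have hsum : ∑ c ∈ t, Φy (G c) = 1 := by rw [← map_sum, hGsum, map_one]
  calc ψ (Φx (realCubeFn hf)) = ∑ c ∈ t, ψ (Φy (G c) * Φx (realCubeFn hf)) := by
        rw [← map_sum, ← Finset.sum_mul, hsum, one_mul]
    _ ≤ ∑ c ∈ t, (ψ (Φy (G c * realCubeFn hf)) + ε • ψ (Φy (G c))) :=
        Finset.sum_le_sum fun c _ => hcell c
    _ = ψ (Φy (realCubeFn hf)) + ε • ψ 1 := by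
        rw [Finset.sum_add_distrib, ← Finset.smul_sum, ← map_sum, ← map_sum, ← map_sum,
          ← map_sum, ← Finset.sum_mul, hGsum, one_mul, map_one]

end FunctionalCalculus

theorem monotone_trace_functional_concave_general
    {A : Type*} [CStarAlgebra A] [PartialOrder A] [StarOrderedRing A]
    {n : ℕ} (α β : Fin n → ℝ)
    (f : (Fin n → ℝ) → ℝ)
    (hf_cont : ContinuousOn f (cube fun i => Set.Icc (α i) (β i)))
    (hf_mono : ∀ u v : Fin n → ℝ, u ∈ cube (fun i => Set.Icc (α i) (β i)) →
      v ∈ cube (fun i => Set.Icc (α i) (β i)) → (∀ i, u i ≤ v i) → f u ≤ f v)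
    (hf_conc : ConcaveOn ℝ (cube fun i => Set.Icc (α i) (β i)) f)
    (x y : Fin n → A)
    (hxy : ∀ i, x i ≤ y i)
    (πx πy : C(cube fun i => Set.Icc (α i) (β i), ℂ) →⋆ₐ[ℂ] A)
    (hπx : ∀ i, πx (coordFn _ i) = x i) (hπy : ∀ i, πy (coordFn _ i) = y i)
    (φ : A →ₗ[ℂ] ℂ) (hφ_pos : ∀ b : A, 0 ≤ φ (star b * b))
    (hφ_cent : ∀ i, ∀ b : A, φ (b * y i) = φ (y i * b)) :
    φ (πx (cubeFn hf_cont)) ≤ φ (πy (cubeFn hf_cont)) := by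
  let ψ := PositiveLinearMap.ofStarMulSelfNonneg φ hφ_pos
  let ι := ContinuousMap.realToRCLikeStarAlgHom (cube fun i => Set.Icc (α i) (β i)) ℂ
  have hcent (g) : πy g ∈ ψ.centralizer :=
    πy.apply_mem_of_separatesPoints ψ.isClosed_centralizer (fun _ _ => exists_coordFn_ne _)
      (fun i b => by rw [hπy]; exact hφ_cent i b) g
  refine le_of_forall_pos_le_add_smul fun ε hε =>
    ψ.apply_le_apply_add_smul_of_concaveOn (Φx := (πx.restrictScalars ℝ).comp ι)
      (Φy := (πy.restrictScalars ℝ).comp ι) hf_cont (fun u hu v hv huv => hf_mono u v hu hv huv)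
      hf_conc (fun g => hcent _) (fun i => ?_) hε
  change πx (coordFn _ i) ≤ πy (coordFn _ i)
  rw [hπx, hπy]
  exact hxy i

/-- **Monotonicity under a trace-like functional, concave case** (Theorem 16, second half).
Let `f` be continuous, monotone increasing in each variable and concave on the cube
`[α 1, β 1] × ⋯ × [α n, β n]`.  For abelian `n`-tuples `x`, `y` of self-adjoint elements
of a unital C*-algebra `A` with `α i • 1 ≤ x i ≤ y i ≤ β i • 1`, and any positive linear
functional `φ` containing `y 1, …, y n` in its centralizer, `φ (f x) ≤ φ (f y)`.  The
functional calculus is encoded by star-algebra homomorphisms `πx`, `πy` sending the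
coordinate functions to the `x i` resp. `y i`. -/
theorem monotone_trace_functional_concave
    {A : Type*} [CStarAlgebra A] [PartialOrder A] [StarOrderedRing A]
    {n : ℕ} (α β : Fin n → ℝ) (hαβ : ∀ i, α i ≤ β i)
    (f : (Fin n → ℝ) → ℝ)
    (hf_cont : ContinuousOn f (cube fun i => Set.Icc (α i) (β i)))
    (hf_mono : ∀ u v : Fin n → ℝ, u ∈ cube (fun i => Set.Icc (α i) (β i)) →
      v ∈ cube (fun i => Set.Icc (α i) (β i)) → (∀ i, u i ≤ v i) → f u ≤ f v)
    (hf_conc : ConcaveOn ℝ (cube fun i => Set.Icc (α i) (β i)) f)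
    (x y : Fin n → A)
    (hx_sa : ∀ i, IsSelfAdjoint (x i)) (hy_sa : ∀ i, IsSelfAdjoint (y i))
    (hx_comm : ∀ i j, x i * x j = x j * x i) (hy_comm : ∀ i j, y i * y j = y j * y i)
    (hα : ∀ i, algebraMap ℝ A (α i) ≤ x i) (hxy : ∀ i, x i ≤ y i)
    (hβ : ∀ i, y i ≤ algebraMap ℝ A (β i))
    (πx πy : C(cube fun i => Set.Icc (α i) (β i), ℂ) →⋆ₐ[ℂ] A)
    (hπx : ∀ i, πx (coordFn _ i) = x i) (hπy : ∀ i, πy (coordFn _ i) = y i)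
    (φ : A →ₗ[ℂ] ℂ) (hφ_pos : ∀ b : A, 0 ≤ φ (star b * b))
    (hφ_cent : ∀ i, ∀ b : A, φ (b * y i) = φ (y i * b)) :
    φ (πx (cubeFn hf_cont)) ≤ φ (πy (cubeFn hf_cont)) :=
  monotone_trace_functional_concave_general α β f hf_cont hf_mono hf_conc x y hxy πx πy hπx hπy φ
    hφ_pos hφ_cent
end

section
/- The function sin(t) on the interval [−π/2, π/2] cannot be approximated within (2π)^{-2} in the supremum norm by any sum f = f_+ + f_− of a convex increasing function f_+ and a concave increasing function f_− on [−π/2, π/2]: for every such f, sup_{t ∈ [−π/2, π/2]} | sin(t) − f(t) | > (2π)^{-2}. -/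
/-!
Write `f = f₊ + f₋` and look at increments over intervals of length `π/6`. Those of the convex
`f₊` grow from left to right, those of the concave `f₋` shrink, and both are nonnegative. So the
increment of `f` over the middle interval `[-π/12, π/12]` is at most the sum of its increments over
`[-π/2, -π/3]` and `[π/3, π/2]`. For `sin` the middle increment is `2 sin (π/12) ≈ 0.518`, while
the outer ones are `1 - √3/2 ≈ 0.134` each; six approximation errors of size `(2π)⁻² ≈ 0.025`
cannot bridge that gap.
-/

open Real fwdDiff

section

variable {𝕜 : Type*} [Field 𝕜] [LinearOrder 𝕜] [IsStrictOrderedRing 𝕜] {s : Set 𝕜}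
  {f : 𝕜 → 𝕜} {x y h : 𝕜}

theorem ConvexOn.fwdDiff_le_fwdDiff (hf : ConvexOn 𝕜 s f) (hx : x ∈ s) (hy : y + h ∈ s)
    (hh : 0 ≤ h) (hxy : x ≤ y) : Δ_[h] f x ≤ Δ_[h] f y := by
  rcases hh.eq_or_lt with rfl | hh
  · simp [fwdDiff]
  rcases hxy.eq_or_lt with rfl | hxy
  · rfl
  have mem : ∀ t, x ≤ t → t ≤ y + h → t ∈ s := fun t h₁ h₂ ↦ hf.1.ordConnected.out hx hy ⟨h₁, h₂⟩
  -- slope on `[x, x + h]` ≤ slope on `[x, y + h]` ≤ slope on `[y, y + h]`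
  have left := hf.secant_mono hx (mem (x + h) (by linarith) (by linarith)) hy
    (by linarith : x < x + h).ne' (by linarith : x < y + h).ne' (by linarith)
  have right := hf.secant_mono hy hx (mem y (by linarith) (by linarith))
    (by linarith : x < y + h).ne (by linarith : y < y + h).ne (by linarith)
  rw [← neg_div_neg_eq, neg_sub, neg_sub, ← neg_div_neg_eq (f y - _), neg_sub, neg_sub,
    add_sub_cancel_left] at right
  rw [add_sub_cancel_left] at left
  exact (div_le_div_iff_of_pos_right hh).1 (left.trans right)

theorem ConcaveOn.fwdDiff_le_fwdDiff (hf : ConcaveOn 𝕜 s f) (hx : x ∈ s) (hy : y + h ∈ s)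
    (hh : 0 ≤ h) (hxy : x ≤ y) : Δ_[h] f y ≤ Δ_[h] f x := by
  have := hf.neg.fwdDiff_le_fwdDiff hx hy hh hxy
  simp only [fwdDiff, Pi.neg_apply] at this ⊢
  linarith

theorem MonotoneOn.fwdDiff_nonneg (hf : MonotoneOn f s) (hx : x ∈ s) (hxh : x + h ∈ s)
    (hh : 0 ≤ h) : 0 ≤ Δ_[h] f x :=
  sub_nonneg.2 (hf hx hxh (le_add_of_nonneg_right hh))

variable {fp fm : 𝕜 → 𝕜} {a b c : 𝕜}

theorem fwdDiff_convexOn_add_concaveOn_le (hp : ConvexOn 𝕜 s fp) (hp' : MonotoneOn fp s)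
    (hm : ConcaveOn 𝕜 s fm) (hm' : MonotoneOn fm s) (ha : a ∈ s) (hc : c + h ∈ s) (hh : 0 ≤ h)
    (hab : a ≤ b) (hbc : b ≤ c) :
    Δ_[h] (fp + fm) b ≤ Δ_[h] (fp + fm) a + Δ_[h] (fp + fm) c := by
  have mem : ∀ t, a ≤ t → t ≤ c + h → t ∈ s := fun t h₁ h₂ ↦ hp.1.ordConnected.out ha hc ⟨h₁, h₂⟩
  have hp_bc := hp.fwdDiff_le_fwdDiff (mem b hab (by linarith)) hc hh hbc
  have hm_ab := hm.fwdDiff_le_fwdDiff ha (mem (b + h) (by linarith) (by linarith)) hh hab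
  have hp_a := hp'.fwdDiff_nonneg ha (mem (a + h) (by linarith) (by linarith)) hh
  have hm_c := hm'.fwdDiff_nonneg (mem c (by linarith) (by linarith)) hc hh
  simp only [fwdDiff_add, Pi.add_apply]
  linarith

theorem fwdDiff_le_of_abs_sub_convexOn_add_concaveOn_le {g : 𝕜 → 𝕜} {ε : 𝕜}
    (hp : ConvexOn 𝕜 s fp) (hp' : MonotoneOn fp s) (hm : ConcaveOn 𝕜 s fm)
    (hm' : MonotoneOn fm s) (hg : ∀ t ∈ s, |g t - (fp t + fm t)| ≤ ε) (ha : a ∈ s)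
    (hc : c + h ∈ s) (hh : 0 ≤ h) (hab : a ≤ b) (hbc : b ≤ c) :
    Δ_[h] g b ≤ Δ_[h] g a + Δ_[h] g c + 6 * ε := by
  have approx : ∀ t, a ≤ t → t ≤ c + h → |g t - (fp + fm) t| ≤ ε :=
    fun t h₁ h₂ ↦ hg t (hp.1.ordConnected.out ha hc ⟨h₁, h₂⟩)
  have key := fwdDiff_convexOn_add_concaveOn_le hp hp' hm hm' ha hc hh hab hbc
  have ea := abs_le.1 (approx a le_rfl (by linarith))
  have ea' := abs_le.1 (approx (a + h) (by linarith) (by linarith))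
  have eb := abs_le.1 (approx b hab (by linarith))
  have eb' := abs_le.1 (approx (b + h) (by linarith) (by linarith))
  have ec := abs_le.1 (approx c (by linarith) (by linarith))
  have ec' := abs_le.1 (approx (c + h) (by linarith) le_rfl)
  simp only [fwdDiff] at key ⊢
  linarith

end

theorem fwdDiff_sin_add_lt :
    Δ_[π / 6] sin (-(π / 2)) + Δ_[π / 6] sin (π / 3) + 6 * ((2 * π) ^ 2)⁻¹ <
      Δ_[π / 6] sin (-(π / 12)) := by
  have e₁ : -(π / 2) + π / 6 = -(π / 3) := by ring
  have e₂ : π / 3 + π / 6 = π / 2 := by ring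
  have e₃ : -(π / 12) + π / 6 = π / 12 := by ring
  simp only [fwdDiff, e₁, e₂, e₃, sin_neg, sin_pi_div_two, sin_pi_div_three]
  have hsin : π / 12 - (π / 12) ^ 3 / 6 < sin (π / 12) := sin_gt_sub_cube (by positivity)
  have hsqrt : 1.7 ≤ √3 := Real.le_sqrt_of_sq_le (by norm_num)
  have hε : 6 * ((2 * π) ^ 2)⁻¹ ≤ 1 / 6 := by
    rw [inv_eq_one_div, mul_one_div, div_le_div_iff₀ (by positivity) (by norm_num)]
    nlinarith [pi_gt_three]
  nlinarith [pi_gt_three, pi_lt_d2]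

/-- The function `sin` on `[-π/2, π/2]` cannot be approximated within `(2π)⁻²` in the
supremum norm by a sum `f = f₊ + f₋` of a convex increasing function `f₊` and a concave
increasing function `f₋` on `[-π/2, π/2]`: for every such `f` there is a point `t` of
the interval with `|sin t - f t| > (2π)⁻²` (i.e. the sup of `|sin - f|` exceeds
`(2π)⁻²`). -/
theorem sin_not_approximable_by_convex_plus_concave_increasing
    (fp fm : ℝ → ℝ)
    (hfp_conv : ConvexOn ℝ (Set.Icc (-(π / 2)) (π / 2)) fp)
    (hfp_mono : MonotoneOn fp (Set.Icc (-(π / 2)) (π / 2)))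
    (hfm_conc : ConcaveOn ℝ (Set.Icc (-(π / 2)) (π / 2)) fm)
    (hfm_mono : MonotoneOn fm (Set.Icc (-(π / 2)) (π / 2))) :
    ∃ t ∈ Set.Icc (-(π / 2)) (π / 2),
      ((2 * π) ^ 2)⁻¹ < |Real.sin t - (fp t + fm t)| := by
  by_contra! happrox
  have hπ := pi_pos
  have := fwdDiff_le_of_abs_sub_convexOn_add_concaveOn_le hfp_conv hfp_mono hfm_conc hfm_mono
    happrox (a := -(π / 2)) (b := -(π / 12)) (c := π / 3) (h := π / 6)
    ⟨le_rfl, by linarith⟩ ⟨by linarith, by linarith⟩ (by positivity) (by linarith) (by linarith)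
  linarith [fwdDiff_sin_add_lt]
end
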